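/- arXiv:1605.08615 — 5 statements merged into one kernel-verified Lean document; each statement's English description precedes it below -/
import Mathlib

section
/- Let n be odd and M an n×n real matrix (indices taken modulo n) such that every 2×2 cyclic block sums to 4w, i.e. M_{i,j}+M_{i,j+1}+M_{i+1,j}+M_{i+1,j+1}=4w for all i,j, and the alternating sum ∑_{i,j}(-1)^{i+j}M_{i,j}=0. Then M is the zero matrix. -/
/-!
Fix a column `j` and put `s a = M a j + M a (j + 1)`. The block condition says
`s a + s (a + 1) = 4w` for all `a`, so `s` is 2-periodic, and since 2 is a unit modulo
an odd `n`, it is constant, equal to `2w`. The same argument along a row makes `M` constant,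
equal to `w`. For odd `n` the alternating sum of a constant matrix `w` is `w`, so `w = 0`.
-/

open Finset

namespace ZMod

variable {n : ℕ}

theorem isUnit_two_of_odd (hn : Odd n) : IsUnit (2 : ZMod n) := by
  simpa using (unitOfCoprime 2 (Nat.coprime_two_left.mpr hn)).isUnit

theorem eq_of_periodic {α : Type*} {f : ZMod n → α} {c : ZMod n} (hc : IsUnit c)
    (hf : Function.Periodic f c) (x y : ZMod n) : f x = f y := by
  obtain ⟨u, rfl⟩ := hc
  have hy : y = x + ((cast (↑u⁻¹ * (y - x) : ZMod n) : ℤ) : ZMod n) * u := by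
    rw [intCast_zmod_cast, mul_comm, ← mul_assoc, Units.mul_inv, one_mul, add_sub_cancel]
  rw [hy, hf.int_mul _ x]

theorem eq_of_add_apply_add_one_eq_two_mul {K : Type*} [Field K] [NeZero (2 : K)] (hn : Odd n)
    {f : ZMod n → K} {c : K} (hf : ∀ x, f x + f (x + 1) = 2 * c) (x : ZMod n) : f x = c := by
  have hper : Function.Periodic f 2 := fun y => by
    have h := hf (y + 1)
    rw [add_assoc, one_add_one_eq_two, ← hf y, add_comm (f y)] at h
    exact add_left_cancel h
  have hx := hf x
  rw [← eq_of_periodic (isUnit_two_of_odd hn) hper x (x + 1), ← two_mul] at hx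
  exact mul_left_cancel₀ two_ne_zero hx

theorem sum_neg_one_pow_val {R : Type*} [Ring R] [NeZero n] (hn : Odd n) :
    ∑ i : ZMod n, (-1 : R) ^ i.val = 1 := by
  obtain ⟨m, rfl⟩ : ∃ m, n = m + 1 := Nat.exists_eq_succ_of_ne_zero (NeZero.ne n)
  rw [show ∑ i : ZMod (m + 1), (-1 : R) ^ i.val = ∑ i : Fin (m + 1), (-1 : R) ^ (i : ℕ) from rfl,
    Fin.sum_univ_eq_sum_range (fun i => (-1 : R) ^ i), neg_one_geom_sum,
    if_neg (Nat.not_even_iff_odd.mpr hn)]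

end ZMod

theorem stmt_0 (n : ℕ) [NeZero n] (hn : Odd n)
    (M : Matrix (ZMod n) (ZMod n) ℝ) (w : ℝ)
    (hblock : ∀ i j : ZMod n,
      M i j + M i (j + 1) + M (i + 1) j + M (i + 1) (j + 1) = 4 * w)
    (halt : ∑ i : ZMod n, ∑ j : ZMod n, (-1 : ℝ) ^ (i.val + j.val) * M i j = 0) :
    M = 0 := by
  have hpair : ∀ i j, M i j + M i (j + 1) = 2 * w := fun i j =>
    ZMod.eq_of_add_apply_add_one_eq_two_mul hn (f := fun a => M a j + M a (j + 1))
      (fun a => by linarith [hblock a j]) i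
  have hconst : ∀ i j, M i j = w := fun i =>
    ZMod.eq_of_add_apply_add_one_eq_two_mul hn (fun j => by linarith [hpair i j])
  have hw : w = 0 := by
    simp only [hconst, pow_add, ← sum_mul_sum, ← sum_mul, ZMod.sum_neg_one_pow_val hn] at halt
    simpa using halt
  ext i j
  rw [hconst, hw, Matrix.zero_apply]
end

section
/- For every n, the space ℝ^{n×n} is the direct sum of S_n (semimagic matrices with some weight) and V_n (matrices with the vertex cross sum property M_{i,j}+M_{k,l}=M_{i,l}+M_{k,j} and total entry sum 0): S_n ∩ V_n = {0} and S_n + V_n = ℝ^{n×n}. -/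
/-!
A matrix with the cross property `M i j + M k l = M i l + M k j` has `M i j - M k j` independent
of `j`, so two rows with equal sums coincide, and likewise for columns. A semimagic matrix with
the cross property is therefore constant, and total sum `0` makes it zero. Conversely every `M`
splits as `(M - B) + B` with `B i j = a i + b j`, where `a` and `b` are the centred row and
column sums of `M` divided by `n`: `B` has the cross property and total sum `0`, and subtracting
it leaves all row and column sums equal to the mean row sum.
-/

def IsSemimagic {n : ℕ} (M : Matrix (Fin n) (Fin n) ℝ) : Prop :=
  ∃ w : ℝ, (∀ i, ∑ j, M i j = n * w) ∧ (∀ i, ∑ j, M j i = n * w)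

def IsVertexCross0 {n : ℕ} (M : Matrix (Fin n) (Fin n) ℝ) : Prop :=
  (∀ i j k l : Fin n, M i j + M k l = M i l + M k j) ∧ ∑ i, ∑ j, M i j = 0

open Finset Matrix

def HasCrossProperty {m n R : Type*} [Add R] (M : Matrix m n R) : Prop :=
  ∀ i j k l, M i j + M k l = M i l + M k j

theorem hasCrossProperty_of_add {m n R : Type*} [AddCommMonoid R] (a : m → R) (b : n → R) :
    HasCrossProperty (of fun i j => a i + b j) := fun i j k l => by
  simp only [of_apply]
  abel

namespace HasCrossProperty

variable {m n R : Type*} [AddCommGroup R] {M : Matrix m n R}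

theorem transpose (hM : HasCrossProperty M) : HasCrossProperty Mᵀ := fun j i l k => by
  simpa only [transpose_apply, add_comm (M k j)] using hM i j k l

theorem sum_row_sub_sum_row [Fintype n] (hM : HasCrossProperty M) (i k : m) (l : n) :
    ∑ j, M i j - ∑ j, M k j = Fintype.card n • (M i l - M k l) := by
  rw [← sum_sub_distrib, ← card_univ, ← sum_const]
  exact sum_congr rfl fun j _ => sub_eq_sub_iff_add_eq_add.mpr (hM i j k l)

theorem eq_of_sum_row_eq [Fintype n] [IsAddTorsionFree R] (hM : HasCrossProperty M) {i k : m}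
    (h : ∑ j, M i j = ∑ j, M k j) (l : n) : M i l = M k l := by
  have : Nonempty n := ⟨l⟩
  have hcard : Fintype.card n ≠ 0 := Fintype.card_ne_zero
  rw [← sub_eq_zero, ← nsmul_eq_zero_iff_right hcard, ← hM.sum_row_sub_sum_row, h, sub_self]

end HasCrossProperty

section Semimagic

variable {n : ℕ}

theorem IsSemimagic.sum_row_eq {M : Matrix (Fin n) (Fin n) ℝ} (hS : IsSemimagic M) (i k : Fin n) :
    ∑ j, M i j = ∑ j, M k j := by
  obtain ⟨w, hrow, -⟩ := hS
  rw [hrow, hrow]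

theorem IsSemimagic.sum_col_eq {M : Matrix (Fin n) (Fin n) ℝ} (hS : IsSemimagic M) (j l : Fin n) :
    ∑ i, M i j = ∑ i, M i l := by
  obtain ⟨w, -, hcol⟩ := hS
  rw [hcol, hcol]

theorem IsSemimagic.eq_zero_of_isVertexCross0 {M : Matrix (Fin n) (Fin n) ℝ}
    (hS : IsSemimagic M) (hV : IsVertexCross0 M) : M = 0 := by
  obtain ⟨hM, hsum⟩ : HasCrossProperty M ∧ _ := hV
  ext i j
  have hconst : ∀ k l, M k l = M i j := fun k l =>
    (hM.eq_of_sum_row_eq (hS.sum_row_eq k i) l).trans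
      (hM.transpose.eq_of_sum_row_eq (hS.sum_col_eq l j) i)
  simp only [hconst, sum_const, card_univ, Fintype.card_fin, nsmul_eq_mul] at hsum
  simpa [i.pos.ne'] using hsum

end Semimagic

section Decomposition

variable {n : ℕ}

noncomputable def scaledDeviation (v : Fin n → ℝ) (i : Fin n) : ℝ :=
  (v i - (∑ k, v k) / n) / n

theorem sum_scaledDeviation (v : Fin n → ℝ) : ∑ i, scaledDeviation v i = 0 := by
  simp only [scaledDeviation, ← sum_div, sum_sub_distrib, sum_const, card_univ, Fintype.card_fin,
    nsmul_eq_mul]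
  rcases eq_or_ne (n : ℝ) 0 with hn | hn
  · simp [hn]
  · rw [mul_div_cancel_left₀ _ hn, sub_self, zero_div]

theorem mul_scaledDeviation (v : Fin n → ℝ) (i : Fin n) :
    n * scaledDeviation v i = v i - (∑ k, v k) / n :=
  mul_div_cancel₀ _ (Nat.cast_ne_zero.mpr i.pos.ne')

noncomputable def crossPart (M : Matrix (Fin n) (Fin n) ℝ) : Matrix (Fin n) (Fin n) ℝ :=
  of fun i j => scaledDeviation (fun i => ∑ l, M i l) i + scaledDeviation (fun j => ∑ k, M k j) j

variable (M : Matrix (Fin n) (Fin n) ℝ)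

theorem isVertexCross0_crossPart : IsVertexCross0 (crossPart M) := by
  refine ⟨hasCrossProperty_of_add _ _, ?_⟩
  simp [crossPart, sum_add_distrib, ← mul_sum, sum_scaledDeviation]

theorem sum_row_crossPart (i : Fin n) :
    ∑ j, crossPart M i j = ∑ j, M i j - (∑ k, ∑ l, M k l) / n := by
  simp [crossPart, sum_add_distrib, sum_scaledDeviation, mul_scaledDeviation]

theorem sum_col_crossPart (j : Fin n) :
    ∑ i, crossPart M i j = ∑ i, M i j - (∑ k, ∑ l, M k l) / n := by
  simp [crossPart, sum_add_distrib, sum_scaledDeviation, mul_scaledDeviation,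
    sum_comm (γ := Fin n)]

theorem isSemimagic_sub_crossPart : IsSemimagic (M - crossPart M) := by
  have hmean (i : Fin n) : (∑ k, ∑ l, M k l) / n = n * ((∑ k, ∑ l, M k l) / n ^ 2) := by
    have hn : (n : ℝ) ≠ 0 := Nat.cast_ne_zero.mpr i.pos.ne'
    field_simp
  refine ⟨(∑ k, ∑ l, M k l) / n ^ 2, fun i => ?_, fun j => ?_⟩
  · simp only [Matrix.sub_apply, sum_sub_distrib, sum_row_crossPart, sub_sub_cancel, hmean i]
  · simp only [Matrix.sub_apply, sum_sub_distrib, sum_col_crossPart, sub_sub_cancel, hmean j]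

end Decomposition

theorem stmt_5 (n : ℕ) :
    (∀ M : Matrix (Fin n) (Fin n) ℝ, IsSemimagic M → IsVertexCross0 M → M = 0) ∧
    (∀ M : Matrix (Fin n) (Fin n) ℝ, ∃ A B : Matrix (Fin n) (Fin n) ℝ,
      IsSemimagic A ∧ IsVertexCross0 B ∧ M = A + B) :=
  ⟨fun _ hS hV => hS.eq_zero_of_isVertexCross0 hV, fun M =>
    ⟨M - crossPart M, crossPart M, isSemimagic_sub_crossPart M, isVertexCross0_crossPart M,
      (sub_add_cancel M _).symm⟩⟩
end

section
/- Let y ∈ ℝⁿ be nonzero. Define N(y) = {M : yᵀMu = 0 = uᵀMy for all u ⊥ y} and M(y) = {M : uᵀMv = 0 for all u,v ⊥ y, and yᵀMy = 0}. Then N(y)·N(y) ⊆ N(y), M(y)·M(y) ⊆ N(y), N(y)·M(y) ⊆ M(y), and M(y)·N(y) ⊆ M(y). -/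
/-!
With respect to the decomposition `ℝⁿ = ℝ y ⊕ y^⊥`, the condition `N(y)` says that a matrix is
block diagonal (it preserves both the line and its orthogonal complement) and `M(y)` that it is
block antidiagonal (it swaps them). Products of such matrices obey the `ℤ/2`-grading rules.
The only non-formal input is that a vector orthogonal to `y^⊥` lies on the line `ℝ y`.
-/

open Matrix

variable {ι R : Type*} [Fintype ι]

section CommSemiring

variable [CommSemiring R]

def IsBlockDiagonalAlong (y : ι → R) (X : Matrix ι ι R) : Prop :=
  (∀ u : ι → R, u ⬝ᵥ y = 0 → X *ᵥ u ⬝ᵥ y = 0) ∧ ∃ c : R, X *ᵥ y = c • y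

def IsBlockAntidiagonalAlong (y : ι → R) (X : Matrix ι ι R) : Prop :=
  (∀ u : ι → R, u ⬝ᵥ y = 0 → ∃ c : R, X *ᵥ u = c • y) ∧ X *ᵥ y ⬝ᵥ y = 0

namespace IsBlockDiagonalAlong

variable {y : ι → R} {X X' : Matrix ι ι R}

theorem mul (hX : IsBlockDiagonalAlong y X) (hX' : IsBlockDiagonalAlong y X') :
    IsBlockDiagonalAlong y (X * X') := by
  obtain ⟨c, hc⟩ := hX.2
  obtain ⟨c', hc'⟩ := hX'.2
  refine ⟨fun u hu => ?_, c * c', ?_⟩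
  · rw [← mulVec_mulVec]
    exact hX.1 _ (hX'.1 u hu)
  · rw [← mulVec_mulVec, hc', mulVec_smul, hc, smul_smul, mul_comm]

theorem mul_isBlockAntidiagonalAlong (hX : IsBlockDiagonalAlong y X)
    (hX' : IsBlockAntidiagonalAlong y X') : IsBlockAntidiagonalAlong y (X * X') := by
  obtain ⟨c, hc⟩ := hX.2
  refine ⟨fun u hu => ?_, ?_⟩
  · obtain ⟨c', hc'⟩ := hX'.1 u hu
    rw [← mulVec_mulVec, hc', mulVec_smul, hc, smul_smul]
    exact ⟨_, rfl⟩
  · rw [← mulVec_mulVec]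
    exact hX.1 _ hX'.2

end IsBlockDiagonalAlong

namespace IsBlockAntidiagonalAlong

variable {y : ι → R} {X X' : Matrix ι ι R}

theorem mul (hX : IsBlockAntidiagonalAlong y X) (hX' : IsBlockAntidiagonalAlong y X') :
    IsBlockDiagonalAlong y (X * X') := by
  refine ⟨fun u hu => ?_, ?_⟩
  · obtain ⟨c', hc'⟩ := hX'.1 u hu
    rw [← mulVec_mulVec, hc', mulVec_smul, smul_dotProduct, hX.2, smul_zero]
  · rw [← mulVec_mulVec]
    exact hX.1 _ hX'.2

theorem mul_isBlockDiagonalAlong (hX : IsBlockAntidiagonalAlong y X)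
    (hX' : IsBlockDiagonalAlong y X') : IsBlockAntidiagonalAlong y (X * X') := by
  obtain ⟨c', hc'⟩ := hX'.2
  refine ⟨fun u hu => ?_, ?_⟩
  · rw [← mulVec_mulVec]
    exact hX.1 _ (hX'.1 u hu)
  · rw [← mulVec_mulVec, hc', mulVec_smul, smul_dotProduct, hX.2, smul_zero]

end IsBlockAntidiagonalAlong

end CommSemiring

section LinearOrderedField

variable [Field R] [LinearOrder R] [IsStrictOrderedRing R]

theorem exists_eq_smul_of_forall_dotProduct_eq_zero {y w : ι → R}
    (h : ∀ u : ι → R, u ⬝ᵥ y = 0 → u ⬝ᵥ w = 0) : ∃ c : R, w = c • y := by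
  set c := (w ⬝ᵥ y) / (y ⬝ᵥ y)
  have hc : c * (y ⬝ᵥ y) = w ⬝ᵥ y := by
    rcases eq_or_ne (y ⬝ᵥ y) 0 with hyy | hyy
    · simp [dotProduct_self_eq_zero.mp hyy]
    · exact div_mul_cancel₀ _ hyy
  have hperp : (w - c • y) ⬝ᵥ y = 0 := by
    rw [sub_dotProduct, smul_dotProduct, smul_eq_mul, hc, sub_self]
  have hself : (w - c • y) ⬝ᵥ (w - c • y) = 0 := by
    rw [dotProduct_sub, dotProduct_smul, h _ hperp, hperp, smul_zero, sub_zero]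
  exact ⟨c, sub_eq_zero.mp (dotProduct_self_eq_zero.mp hself)⟩

theorem isBlockDiagonalAlong_iff {y : ι → R} {X : Matrix ι ι R} :
    IsBlockDiagonalAlong y X ↔
      ∀ u : ι → R, u ⬝ᵥ y = 0 → y ⬝ᵥ X *ᵥ u = 0 ∧ u ⬝ᵥ X *ᵥ y = 0 := by
  constructor
  · rintro ⟨hperp, c, hc⟩ u hu
    rw [dotProduct_comm, hc, dotProduct_smul, hu, smul_zero]
    exact ⟨hperp u hu, rfl⟩
  · intro h
    refine ⟨fun u hu => ?_, exists_eq_smul_of_forall_dotProduct_eq_zero fun u hu => (h u hu).2⟩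
    rw [dotProduct_comm]
    exact (h u hu).1

theorem isBlockAntidiagonalAlong_iff {y : ι → R} {X : Matrix ι ι R} :
    IsBlockAntidiagonalAlong y X ↔
      (∀ u v : ι → R, u ⬝ᵥ y = 0 → v ⬝ᵥ y = 0 → u ⬝ᵥ X *ᵥ v = 0) ∧ y ⬝ᵥ X *ᵥ y = 0 := by
  rw [IsBlockAntidiagonalAlong, dotProduct_comm (X *ᵥ y)]
  refine and_congr_left' ⟨fun h u v hu hv => ?_, fun h v hv => ?_⟩
  · obtain ⟨c, hc⟩ := h v hv
    rw [hc, dotProduct_smul, hu, smul_zero]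
  · exact exists_eq_smul_of_forall_dotProduct_eq_zero fun u hu => h u v hu hv

end LinearOrderedField

theorem stmt_10_general (n : ℕ) (y : Fin n → ℝ)
    (N M : Matrix (Fin n) (Fin n) ℝ → Prop)
    (hN : ∀ X, N X ↔ ∀ u : Fin n → ℝ, u ⬝ᵥ y = 0 →
      y ⬝ᵥ X.mulVec u = 0 ∧ u ⬝ᵥ X.mulVec y = 0)
    (hM : ∀ X, M X ↔ (∀ u v : Fin n → ℝ, u ⬝ᵥ y = 0 → v ⬝ᵥ y = 0 →
      u ⬝ᵥ X.mulVec v = 0) ∧ y ⬝ᵥ X.mulVec y = 0) :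
    (∀ X X', N X → N X' → N (X * X')) ∧
    (∀ X X', M X → M X' → N (X * X')) ∧
    (∀ X X', N X → M X' → M (X * X')) ∧
    (∀ X X', M X → N X' → M (X * X')) := by
  have hN' : ∀ X, N X ↔ IsBlockDiagonalAlong y X :=
    fun X => (hN X).trans isBlockDiagonalAlong_iff.symm
  have hM' : ∀ X, M X ↔ IsBlockAntidiagonalAlong y X :=
    fun X => (hM X).trans isBlockAntidiagonalAlong_iff.symm
  simp only [hN', hM']
  exact ⟨fun _ _ => IsBlockDiagonalAlong.mul, fun _ _ => IsBlockAntidiagonalAlong.mul,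
    fun _ _ => IsBlockDiagonalAlong.mul_isBlockAntidiagonalAlong,
    fun _ _ => IsBlockAntidiagonalAlong.mul_isBlockDiagonalAlong⟩

theorem stmt_10 (n : ℕ) (y : Fin n → ℝ) (hy : y ≠ 0)
    (N M : Matrix (Fin n) (Fin n) ℝ → Prop)
    (hN : ∀ X, N X ↔ ∀ u : Fin n → ℝ, u ⬝ᵥ y = 0 →
      y ⬝ᵥ X.mulVec u = 0 ∧ u ⬝ᵥ X.mulVec y = 0)
    (hM : ∀ X, M X ↔ (∀ u v : Fin n → ℝ, u ⬝ᵥ y = 0 → v ⬝ᵥ y = 0 →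
      u ⬝ᵥ X.mulVec v = 0) ∧ y ⬝ᵥ X.mulVec y = 0) :
    (∀ X X', N X → N X' → N (X * X')) ∧
    (∀ X X', M X → M X' → N (X * X')) ∧
    (∀ X X', N X → M X' → M (X * X')) ∧
    (∀ X X', M X → N X' → M (X * X')) :=
  stmt_10_general n y N M hN hM
end

section
/- The set S_n of semimagic n×n real matrices (all row and column sums equal nw for some w depending on the matrix) is closed under matrix multiplication; moreover, for V_n the weightless vertex-cross-sum matrices, V_n·V_n ⊆ S_n, V_n·S_n ⊆ V_n, and S_n·V_n ⊆ V_n. -/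
/-!
Row sums of `A * B` are `A` applied to the row-sum vector of `B`. If `B` is semimagic that vector
is constant, so the row sums of `A * B` are proportional to those of `A`; if instead `B` has total
sum zero and `A` has the vertex-cross property (its rows differ by constant vectors), the row sums
of `A * B` all agree. The column statements follow by transposing, since transposition preserves
both classes and reverses products.
-/

def IsSemimagic' {n : ℕ} (M : Matrix (Fin n) (Fin n) ℝ) : Prop :=
  ∃ w : ℝ, (∀ i, ∑ j, M i j = n * w) ∧ (∀ i, ∑ j, M j i = n * w)

def IsVertexCross0' {n : ℕ} (M : Matrix (Fin n) (Fin n) ℝ) : Prop :=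
  (∀ i j k l : Fin n, M i j + M k l = M i l + M k j) ∧ ∑ i, ∑ j, M i j = 0

open Matrix

section Sums

variable {ι κ ν R : Type*} [Fintype κ] [Fintype ν] [NonUnitalNonAssocSemiring R]

theorem sum_mul_apply (A : Matrix ι κ R) (B : Matrix κ ν R) (i : ι) :
    ∑ j, (A * B) i j = ∑ k, A i k * ∑ j, B k j := by
  simp only [mul_apply, Finset.mul_sum]
  exact Finset.sum_comm

theorem sum_mul_apply_of_sum_eq {A : Matrix ι κ R} {B : Matrix κ ν R} {r : R}
    (hB : ∀ k, ∑ j, B k j = r) (i : ι) : ∑ j, (A * B) i j = (∑ k, A i k) * r := by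
  simp only [sum_mul_apply, hB, Finset.sum_mul]

theorem sum_sum_mul_of_sum_eq [Fintype ι] {A : Matrix ι κ R} {B : Matrix κ ν R} {r : R}
    (hB : ∀ k, ∑ j, B k j = r) : ∑ i, ∑ j, (A * B) i j = (∑ i, ∑ k, A i k) * r := by
  simp only [sum_mul_apply_of_sum_eq hB, Finset.sum_mul]

end Sums

section VertexCross

variable {ι κ R : Type*}

def IsVertexCross [Add R] (M : Matrix ι κ R) : Prop :=
  ∀ i j k l, M i j + M k l = M i l + M k j

theorem IsVertexCross.transpose [AddCommMagma R] {M : Matrix ι κ R} (hM : IsVertexCross M) :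
    IsVertexCross Mᵀ := fun i j k l => by
  simpa only [transpose_apply, add_comm] using hM j i l k

theorem IsVertexCross.sub_apply_eq [AddCommGroup R] {M : Matrix ι κ R} (hM : IsVertexCross M)
    (i k : ι) (j l : κ) : M i j - M k j = M i l - M k l := by
  rw [sub_eq_sub_iff_add_eq_add, hM]

theorem IsVertexCross.sum_sub_mul [Fintype κ] [Ring R] {M : Matrix ι κ R}
    (hM : IsVertexCross M) (i k : ι) (p : κ) (v : κ → R) :
    ∑ j, (M i j - M k j) * v j = (M i p - M k p) * ∑ j, v j := by
  simp only [hM.sub_apply_eq i k _ p, Finset.mul_sum]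

variable [Fintype ι] [Ring R]

theorem IsVertexCross.mul_of_sum_eq {A B : Matrix ι ι R} {c : R} (hA : IsVertexCross A)
    (hB : ∀ j, ∑ k, B k j = c) : IsVertexCross (A * B) := by
  have hrow : ∀ i k j, (A * B) i j - (A * B) k j = (A i i - A k i) * c := fun i k j => by
    simp only [mul_apply, ← Finset.sum_sub_distrib, ← sub_mul, hA.sum_sub_mul i k i, hB]
  intro i j k l
  rw [← sub_eq_sub_iff_add_eq_add, hrow, hrow]

theorem IsVertexCross.sum_mul_apply_eq {A B : Matrix ι ι R} (hA : IsVertexCross A)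
    (hB : ∑ k, ∑ j, B k j = 0) (i k : ι) : ∑ j, (A * B) i j = ∑ j, (A * B) k j := by
  rw [← sub_eq_zero, sum_mul_apply, sum_mul_apply, ← Finset.sum_sub_distrib]
  simp only [← sub_mul, hA.sum_sub_mul i k i, hB, mul_zero]

end VertexCross

variable {n : ℕ} {M M' : Matrix (Fin n) (Fin n) ℝ}

theorem IsSemimagic'.transpose (hM : IsSemimagic' M) : IsSemimagic' Mᵀ :=
  let ⟨w, hrow, hcol⟩ := hM
  ⟨w, hcol, hrow⟩

theorem IsVertexCross0'.transpose (hM : IsVertexCross0' M) : IsVertexCross0' Mᵀ :=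
  ⟨IsVertexCross.transpose hM.1, by rw [← hM.2]; exact Finset.sum_comm⟩

theorem isSemimagic'_of_sum_eq (hrow : ∀ i k, ∑ j, M i j = ∑ j, M k j)
    (hcol : ∀ i k, ∑ j, M j i = ∑ j, M j k) : IsSemimagic' M := by
  refine ⟨(∑ i, ∑ j, M i j) / (n * n), fun i => ?_, fun i => ?_⟩
  all_goals have hn : (n : ℝ) ≠ 0 := Nat.cast_ne_zero.mpr (Fin.pos i).ne'
  · have htotal : ∑ k, ∑ j, M k j = n * ∑ j, M i j := by
      simp [hrow _ i]
    rw [htotal]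
    field_simp
  · have htotal : ∑ k, ∑ j, M k j = n * ∑ j, M j i :=
      Finset.sum_comm.trans (by simp [hcol _ i])
    rw [htotal]
    field_simp

theorem isSemimagic'_mul (hM : IsSemimagic' M) (hM' : IsSemimagic' M') :
    IsSemimagic' (M * M') := by
  obtain ⟨w, hrow, hcol⟩ := hM
  obtain ⟨w', hrow', hcol'⟩ := hM'
  refine ⟨n * w * w', fun i => ?_, fun i => ?_⟩
  · rw [sum_mul_apply_of_sum_eq hrow', hrow]
    ring
  · have hcol_mul := sum_mul_apply_of_sum_eq (A := M'ᵀ) (B := Mᵀ) hcol i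
    rw [← transpose_mul] at hcol_mul
    calc ∑ j, (M * M') j i = (∑ k, M' k i) * (n * w) := hcol_mul
      _ = n * (n * w * w') := by rw [hcol' i]; ring

theorem isSemimagic'_mul_of_isVertexCross0' (hM : IsVertexCross0' M) (hM' : IsVertexCross0' M') :
    IsSemimagic' (M * M') := by
  refine isSemimagic'_of_sum_eq (IsVertexCross.sum_mul_apply_eq hM.1 hM'.2) fun i k => ?_
  have := IsVertexCross.sum_mul_apply_eq hM'.transpose.1 hM.transpose.2 i k
  rwa [← transpose_mul] at this

theorem isVertexCross0'_mul_of_isSemimagic'_right (hM : IsVertexCross0' M)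
    (hM' : IsSemimagic' M') : IsVertexCross0' (M * M') := by
  obtain ⟨w', hrow', hcol'⟩ := hM'
  exact ⟨IsVertexCross.mul_of_sum_eq hM.1 hcol',
    by rw [sum_sum_mul_of_sum_eq hrow', hM.2, zero_mul]⟩

theorem isVertexCross0'_mul_of_isSemimagic'_left (hM : IsSemimagic' M)
    (hM' : IsVertexCross0' M') : IsVertexCross0' (M * M') := by
  have := (isVertexCross0'_mul_of_isSemimagic'_right hM'.transpose hM.transpose).transpose
  rwa [← transpose_mul, transpose_transpose] at this

theorem stmt_11 (n : ℕ) :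
    (∀ M M' : Matrix (Fin n) (Fin n) ℝ, IsSemimagic' M → IsSemimagic' M' → IsSemimagic' (M * M')) ∧
    (∀ M M' : Matrix (Fin n) (Fin n) ℝ, IsVertexCross0' M → IsVertexCross0' M' → IsSemimagic' (M * M')) ∧
    (∀ M M' : Matrix (Fin n) (Fin n) ℝ, IsVertexCross0' M → IsSemimagic' M' → IsVertexCross0' (M * M')) ∧
    (∀ M M' : Matrix (Fin n) (Fin n) ℝ, IsSemimagic' M → IsVertexCross0' M' → IsVertexCross0' (M * M')) :=
  ⟨fun _ _ => isSemimagic'_mul, fun _ _ => isSemimagic'_mul_of_isVertexCross0',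
    fun _ _ => isVertexCross0'_mul_of_isSemimagic'_right,
    fun _ _ => isVertexCross0'_mul_of_isSemimagic'_left⟩
end

section
/- Every weightless most perfect square matrix (semimagic of weight 0, strongly pandiagonal of weight 0, with all cyclic 2×2 block sums zero and alternating total sum zero) of even size n has rank at most 2; a general most perfect square matrix (weight w) has rank at most 3. -/
/-!
Subtracting the constant matrix `w` leaves a matrix `N` all of whose cyclic `2 × 2` block sums
vanish. Twisting by the sign `ε i = (-1)^i`, which is well defined on `ZMod n` because `n` is even,
turns these block sums into mixed second differences of `D i j = ε i ε j N i j`; so `D` is a sum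
of a function of `i` and a function of `j`, and untwisting writes `N` as a sum of two rank-one
matrices `ε ⊗ a + b ⊗ ε`.
-/

open Matrix

namespace ZMod

variable {n : ℕ} [NeZero n]

theorem apply_eq_apply_zero_of_apply_add_one {α : Type*} {f : ZMod n → α}
    (hf : ∀ i, f (i + 1) = f i) (i : ZMod n) : f i = f 0 := by
  have key : ∀ k : ℕ, f k = f 0 := by
    intro k
    induction k with
    | zero => simp
    | succ k ih => rw [Nat.cast_succ, hf, ih]
  simpa using key i.val

theorem eq_add_sub_of_mixed_diff_eq_zero {G : Type*} [AddCommGroup G] {D : ZMod n → ZMod n → G}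
    (hD : ∀ i j, D (i + 1) (j + 1) - D (i + 1) j - D i (j + 1) + D i j = 0) (i j : ZMod n) :
    D i j = D i 0 + D 0 j - D 0 0 := by
  have hstep : ∀ i j, D (i + 1) j - D i j = D (i + 1) 0 - D i 0 := fun i =>
    apply_eq_apply_zero_of_apply_add_one (f := fun j => D (i + 1) j - D i j)
      (fun j => by rw [← sub_eq_zero, ← hD i j]; abel)
  have hcol : D i j - D i 0 = D 0 j - D 0 0 :=
    apply_eq_apply_zero_of_apply_add_one (f := fun i => D i j - D i 0)
      (fun i => by rw [← sub_eq_zero, ← sub_eq_zero.mpr (hstep i j)]; abel) i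
  rw [sub_eq_iff_eq_add] at hcol
  rw [hcol]
  abel

end ZMod

def altSign (R : Type*) [Ring R] (n : ℕ) (i : ZMod n) : R := (-1) ^ i.val

section altSign

variable {R : Type*} [Ring R] {n : ℕ}

@[simp]
theorem altSign_zero : altSign R n 0 = 1 := by simp [altSign]

theorem altSign_mul_self (i : ZMod n) : altSign R n i * altSign R n i = 1 := by
  rw [altSign, ← pow_add, ← two_mul, pow_mul, neg_one_sq, one_pow]

theorem altSign_natCast (hn : Even n) (k : ℕ) : altSign R n k = (-1) ^ k := by
  rw [altSign, ZMod.val_natCast, neg_one_pow_eq_pow_mod_two, Nat.mod_mod_of_dvd _ hn.two_dvd,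
    ← neg_one_pow_eq_pow_mod_two]

theorem altSign_add_one [NeZero n] (hn : Even n) (i : ZMod n) :
    altSign R n (i + 1) = -altSign R n i := by
  rw [← ZMod.natCast_zmod_val i, ← Nat.cast_succ, altSign_natCast hn, altSign_natCast hn,
    pow_succ, mul_neg_one]

end altSign

theorem Matrix.eq_vecMulVec_altSign_add_of_blockSum_eq_zero {R : Type*} [CommRing R] {n : ℕ}
    [NeZero n] (hn : Even n) {N : Matrix (ZMod n) (ZMod n) R}
    (hN : ∀ i j, N i j + N i (j + 1) + N (i + 1) j + N (i + 1) (j + 1) = 0) :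
    N = vecMulVec (altSign R n) (N 0) +
      vecMulVec (fun i => N i 0 - altSign R n i * N 0 0) (altSign R n) := by
  set ε := altSign R n
  have hε : ∀ i, ε (i + 1) = -ε i := altSign_add_one hn
  have hεε : ∀ i, ε i * ε i = 1 := altSign_mul_self
  have hD := ZMod.eq_add_sub_of_mixed_diff_eq_zero (D := fun i j => ε i * ε j * N i j)
    (fun i j => by simp only [hε]; linear_combination ε i * ε j * hN i j)
  ext i j
  have hij := hD i j
  simp only [ε, altSign_zero, one_mul, mul_one] at hij
  simp only [add_apply, vecMulVec_apply]
  linear_combination (ε i * ε j) * hij - (ε j * ε j * N i j - ε j * N i 0) * hεε i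
    - (N i j - ε i * N 0 j) * hεε j

theorem Matrix.rank_add_le {K m n : Type*} [Field K] [Fintype n] (A B : Matrix m n K) :
    (A + B).rank ≤ A.rank + B.rank := by
  rw [rank, rank, rank, mulVecLin_add]
  have h : LinearMap.range (A.mulVecLin + B.mulVecLin) ≤
      LinearMap.range A.mulVecLin ⊔ LinearMap.range B.mulVecLin := by
    rintro x ⟨y, rfl⟩
    exact Submodule.add_mem_sup (LinearMap.mem_range_self _ y) (LinearMap.mem_range_self _ y)
  exact (Submodule.finrank_mono h).trans (Submodule.finrank_add_le_finrank_add_finrank _ _)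

theorem stmt_17_general (n ν : ℕ) [NeZero n] (hn : n = 2 * ν)
    (M : Matrix (ZMod n) (ZMod n) ℝ) (w : ℝ)
    (hblock : ∀ i j : ZMod n,
      M i j + M i (j + 1) + M (i + 1) j + M (i + 1) (j + 1) = 4 * w) :
    M.rank ≤ 3 ∧ (w = 0 → M.rank ≤ 2) := by
  set C : Matrix (ZMod n) (ZMod n) ℝ := vecMulVec (fun _ => w) (fun _ => 1)
  have hN := eq_vecMulVec_altSign_add_of_blockSum_eq_zero (hn ▸ even_two_mul ν) (N := M - C)
    (fun i j => by simp only [C, Matrix.sub_apply, vecMulVec_apply]; linarith [hblock i j])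
  have hrank : (M - C).rank ≤ 2 := by
    rw [hN]
    exact (rank_add_le _ _).trans (add_le_add (rank_vecMulVec_le _ _) (rank_vecMulVec_le _ _))
  refine ⟨?_, fun hw => ?_⟩
  · calc M.rank = (C + (M - C)).rank := by rw [add_sub_cancel]
      _ ≤ C.rank + (M - C).rank := rank_add_le _ _
      _ ≤ 1 + 2 := add_le_add (rank_vecMulVec_le _ _) hrank
  · have hC : C = 0 := by ext; simp [C, hw, vecMulVec_apply]
    simpa [hC] using hrank

theorem stmt_17 (n ν : ℕ) [NeZero n] (hn : n = 2 * ν)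
    (M : Matrix (ZMod n) (ZMod n) ℝ) (w : ℝ)
    (hrow : ∀ i : ZMod n, ∑ j : ZMod n, M i j = n * w)
    (hcol : ∀ i : ZMod n, ∑ j : ZMod n, M j i = n * w)
    (hpan : ∀ i j : ZMod n, M i j + M (i + (ν : ZMod n)) (j + (ν : ZMod n)) = 2 * w)
    (hblock : ∀ i j : ZMod n,
      M i j + M i (j + 1) + M (i + 1) j + M (i + 1) (j + 1) = 4 * w)
    (halt : ∑ i : ZMod n, ∑ j : ZMod n, (-1 : ℝ) ^ (i.val + j.val) * M i j = 0) :
    M.rank ≤ 3 ∧ (w = 0 → M.rank ≤ 2) :=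
  stmt_17_general n ν hn M w hblock
end
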